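/- Let k ≥ 1 be an integer and let t > 0 be real. Then |R̃_{k+1}(t)| ≤ √π · Γ(k − 1/2) · |B_{2k}| / (8 · k! · t^{2k−1}), where Γ is the real Gamma function and B_{2k} is the 2k-th Bernoulli number. -/

import Mathlib

open MeasureTheory Real

/-- The factor `η_k = 1 / (1 - 2 ^ (1 - 2k))`. -/
noncomputable def eta (k : ℕ) : ℝ := 1 / (1 - (2 : ℝ) ^ ((1 : ℤ) - 2 * k))

/-- The `j`-th term of the asymptotic series for the Riemann–Siegel theta function. -/
noncomputable def Ttilde (j : ℕ) (t : ℝ) : ℝ :=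
  |(Polynomial.aeval ((1 : ℝ) / 2) (Polynomial.bernoulli (2 * j)) : ℝ)| /
    ((4 * (j : ℝ)) * (2 * (j : ℝ) - 1) * t ^ (2 * j - 1))

/-- `Rtildenext k t` is the remainder `R̃_{k+1}(t)` after `k` terms of the series for `ϑ(t)`. -/
noncomputable def Rtildenext (k : ℕ) (t : ℝ) : ℝ :=
  (-∫ u in Set.Ioi (0 : ℝ),
      ((Polynomial.aeval (Int.fract (u + 1 / 2)) (Polynomial.bernoulli (2 * k)) : ℝ) : ℂ) /
        ((4 * (k : ℂ)) * ((u : ℂ) + Complex.I * t) ^ (2 * k))).im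

/-- `Rtilde k t` is the remainder `R̃_k(t)` after `k - 1` terms of the series for `ϑ(t)`. -/
noncomputable def Rtilde (k : ℕ) (t : ℝ) : ℝ := Ttilde k t + Rtildenext k t


section Helpers
open Set

lemma myIntegrable (k : ℕ) (hk : 1 ≤ k) :
    IntegrableOn (fun u : ℝ => (((1:ℝ) + u ^ 2) ^ k)⁻¹) (Ioi (0:ℝ)) := by
  apply (integrable_inv_one_add_sq.integrableOn).mono'
  · exact (Continuous.inv₀ (by continuity) (fun u => by positivity)).aestronglyMeasurable
  · filter_upwards with u
    have h1 : (0:ℝ) < 1 + u ^ 2 := by positivity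
    rw [Real.norm_eq_abs, abs_of_pos (by positivity)]
    apply inv_anti₀ h1
    calc (1:ℝ) + u ^ 2 = (1 + u ^ 2) ^ 1 := (pow_one _).symm
    _ ≤ (1 + u ^ 2) ^ k := pow_le_pow_right₀ (by nlinarith [sq_nonneg u]) hk

lemma myRecurrence (k : ℕ) (hk : 1 ≤ k) :
    (∫ u in Ioi (0:ℝ), (((1:ℝ) + u ^ 2) ^ (k+1))⁻¹) =
      ((2*(k:ℝ) - 1) / (2*k)) * ∫ u in Ioi (0:ℝ), (((1:ℝ) + u ^ 2) ^ k)⁻¹ := by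
  obtain ⟨m, rfl⟩ : ∃ m, k = m + 1 := ⟨k - 1, by omega⟩
  set f : ℝ → ℝ := fun u => u / ((1:ℝ) + u ^ 2) ^ (m+1) with hf
  set f' : ℝ → ℝ := fun u => (1 - 2*((m:ℝ)+1)) / ((1:ℝ) + u ^ 2) ^ (m+1)
      + (2*((m:ℝ)+1)) / ((1:ℝ) + u ^ 2) ^ (m+2) with hf'
  have hpos : ∀ u : ℝ, (0:ℝ) < 1 + u ^ 2 := fun u => by positivity
  have hderiv : ∀ u ∈ Ici (0:ℝ), HasDerivAt f (f' u) u := by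
    intro u _
    have h1 : ((1:ℝ) + u ^ 2) ≠ 0 := (hpos u).ne'
    have hd : HasDerivAt (fun u : ℝ => ((1:ℝ) + u ^ 2) ^ (m+1))
        ((((m:ℝ)+1)) * (1 + u ^ 2) ^ m * (2 * u)) u := by
      have := HasDerivAt.fun_pow ((hasDerivAt_pow 2 u).const_add 1) (m+1)
      refine this.congr_deriv ?_
      simp only [Nat.add_sub_cancel]
      push_cast
      ring
    have h2 := (hasDerivAt_id u).div hd (pow_ne_zero (m+1) h1)
    apply h2.congr_deriv
    show _ = (1 - 2*((m:ℝ)+1)) / ((1:ℝ) + u ^ 2) ^ (m+1)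
      + (2*((m:ℝ)+1)) / ((1:ℝ) + u ^ 2) ^ (m+2)
    simp only [id_eq, one_mul]
    rw [div_add_div _ _ (pow_ne_zero (m+1) h1) (pow_ne_zero (m+2) h1),
      div_eq_div_iff (by positivity) (by positivity)]
    ring
  have int1 := myIntegrable (m+1) (by omega)
  have int2 := myIntegrable (m+2) (by omega)
  have f'int : IntegrableOn f' (Ioi (0:ℝ)) := by
    apply Integrable.add
    · simpa [div_eq_mul_inv] using int1.const_mul (1 - 2*((m:ℝ)+1))
    · simpa [div_eq_mul_inv] using int2.const_mul (2*((m:ℝ)+1))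
  have htend : Filter.Tendsto f Filter.atTop (nhds 0) := by
    apply squeeze_zero' (g := fun u : ℝ => u⁻¹)
    · filter_upwards [Filter.eventually_ge_atTop (0:ℝ)] with u hu
      exact div_nonneg hu (by positivity)
    · filter_upwards [Filter.eventually_ge_atTop (1:ℝ)] with u hu
      show u / ((1:ℝ) + u ^ 2) ^ (m+1) ≤ u⁻¹
      have h2 : u ^ 2 ≤ (1 + u ^ 2) ^ (m+1) := by
        calc u ^ 2 ≤ (1 + u ^ 2) ^ 1 := by nlinarith
        _ ≤ (1 + u ^ 2) ^ (m+1) := pow_le_pow_right₀ (by nlinarith) (by omega)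
      rw [div_le_iff₀ (by positivity), inv_mul_eq_div, le_div_iff₀ (by linarith)]
      nlinarith
    · exact tendsto_inv_atTop_zero
  have key := integral_Ioi_of_hasDerivAt_of_tendsto'
      (f := f) (f' := f') (a := 0) (fun x hx => hderiv x hx) f'int htend
  have hsplit : ∫ u in Ioi (0:ℝ), f' u =
      (1 - 2*((m:ℝ)+1)) * (∫ u in Ioi (0:ℝ), (((1:ℝ) + u ^ 2) ^ (m+1))⁻¹)
      + (2*((m:ℝ)+1)) * ∫ u in Ioi (0:ℝ), (((1:ℝ) + u ^ 2) ^ (m+2))⁻¹ := by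
    rw [hf']
    rw [integral_add (by simpa [div_eq_mul_inv] using int1.const_mul (1 - 2*((m:ℝ)+1)))
      (by simpa [div_eq_mul_inv] using int2.const_mul (2*((m:ℝ)+1)))]
    simp_rw [div_eq_mul_inv, integral_const_mul]
  have hf0 : f 0 = 0 := by simp [hf]
  rw [hsplit, hf0, sub_zero] at key
  have hk0 : (2*((m:ℝ)+1)) ≠ 0 := by positivity
  push_cast
  rw [div_mul_eq_mul_div, eq_div_iff hk0]
  have : m + 1 + 1 = m + 2 := by omega
  rw [this]
  linarith [key]

lemma myIntegral (k : ℕ) (hk : 1 ≤ k) :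
    ∫ u in Ioi (0:ℝ), (((1:ℝ) + u ^ 2) ^ k)⁻¹ =
      Real.sqrt π * Real.Gamma ((k:ℝ) - 1/2) / (2 * Real.Gamma k) := by
  induction k, hk using Nat.le_induction with
  | base =>
      simp only [pow_one, Nat.cast_one]
      rw [integral_Ioi_inv_one_add_sq,
        show (1:ℝ) - 1/2 = 1/2 by norm_num, Real.Gamma_one_half_eq, Real.Gamma_one]
      rw [Real.arctan_zero, Real.mul_self_sqrt Real.pi_nonneg]
      norm_num
  | succ k hk ih =>
      rw [myRecurrence k hk, ih]
      have h1 : ((k:ℝ) + 1 : ℝ) - 1/2 = ((k:ℝ) - 1/2) + 1 := by ring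
      have h2 : (k:ℝ) - 1/2 ≠ 0 := by
        have : (1:ℝ) ≤ (k:ℝ) := by exact_mod_cast hk
        intro h; linarith
      push_cast
      have hk0 : (k:ℝ) ≠ 0 := Nat.cast_ne_zero.mpr (by omega)
      rw [h1, Real.Gamma_add_one h2, Real.Gamma_add_one hk0]
      have hg : Real.Gamma (k:ℝ) ≠ 0 :=
        (Real.Gamma_pos_of_pos (by exact_mod_cast hk : (0:ℝ) < (k:ℝ))).ne'
      field_simp

lemma bernBound (k : ℕ) (hk : k ≠ 0) {x : ℝ} (hx : x ∈ Set.Icc (0:ℝ) 1) :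
    |(Polynomial.aeval x (Polynomial.bernoulli (2 * k)) : ℝ)| ≤ |((bernoulli (2 * k) : ℚ) : ℝ)| := by
  set P : ℝ → ℝ := fun y => (Polynomial.map (algebraMap ℚ ℝ) (Polynomial.bernoulli (2 * k))).eval y
    with hP
  have haeval : ∀ y : ℝ, (Polynomial.aeval y (Polynomial.bernoulli (2 * k)) : ℝ) = P y := by
    intro y
    simp only [hP, Polynomial.aeval_def, Polynomial.eval_map]
  set C : ℝ := (-1 : ℝ) ^ (k + 1) * (2 * π) ^ (2 * k) / 2 / ((2*k).factorial : ℝ) with hC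
  have hCabs : |C| = (2 * π) ^ (2 * k) / 2 / ((2*k).factorial : ℝ) := by
    rw [hC, abs_div, abs_div, abs_mul, abs_pow, abs_neg, abs_one, one_pow, one_mul,
      abs_pow, abs_of_pos (by positivity : (0:ℝ) < 2 * π)]
    norm_num [abs_of_pos (by positivity : (0:ℝ) < (((2*k).factorial : ℝ) : ℝ))]
  have hCpos : 0 < |C| := by
    rw [hCabs]; positivity
  have hx0 : (0:ℝ) ∈ Set.Icc (0:ℝ) 1 := ⟨le_refl _, zero_le_one⟩
  have h0 := hasSum_one_div_nat_pow_mul_cos hk hx0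
  have hxs := hasSum_one_div_nat_pow_mul_cos hk hx
  simp only [mul_zero, Real.cos_zero, mul_one] at h0
  -- h0 : HasSum (fun n => 1 / n ^ (2k)) (C * P 0)
  have habs : ∀ n : ℕ, |1 / (n:ℝ) ^ (2 * k) * Real.cos (2 * π * n * x)| ≤ 1 / (n:ℝ) ^ (2 * k) := by
    intro n
    rw [abs_mul]
    calc |1 / (n:ℝ) ^ (2 * k)| * |Real.cos (2 * π * n * x)|
        ≤ |1 / (n:ℝ) ^ (2 * k)| * 1 :=
          mul_le_mul_of_nonneg_left (Real.abs_cos_le_one _) (abs_nonneg _)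
      _ = 1 / (n:ℝ) ^ (2 * k) := by rw [mul_one, abs_of_nonneg (by positivity)]
  have hsummable : Summable (fun n : ℕ => |1 / (n:ℝ) ^ (2 * k) * Real.cos (2 * π * n * x)|) :=
    Summable.of_nonneg_of_le (fun n => abs_nonneg _) habs h0.summable
  have hsummable2 : Summable (fun n : ℕ => ‖1 / (n:ℝ) ^ (2 * k) * Real.cos (2 * π * n * x)‖) := by
    simpa only [Real.norm_eq_abs] using hsummable
  have hnorm := norm_tsum_le_tsum_norm hsummable2
  simp only [Real.norm_eq_abs] at hnorm
  have key : |C * P x| ≤ C * P 0 := by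
    rw [← hxs.tsum_eq]
    exact hnorm.trans ((Summable.tsum_le_tsum habs hsummable h0.summable).trans_eq h0.tsum_eq)
  have hP0 : P 0 = ((bernoulli (2 * k) : ℚ) : ℝ) := by
    simp only [hP]
    rw [Polynomial.eval_zero_map, Polynomial.bernoulli_eval_zero, eq_ratCast]
  rw [haeval]
  have h1 : |C| * |P x| ≤ |C| * |P 0| := by
    rw [← abs_mul]
    exact key.trans ((le_abs_self _).trans (abs_mul _ _).le)
  rw [← hP0]
  exact le_of_mul_le_mul_left h1 hCpos

lemma baseEq (t : ℝ) (ht : t ≠ 0) (u : ℝ) :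
    t ^ 2 * ((1:ℝ) + (t⁻¹ * u) ^ 2) = u ^ 2 + t ^ 2 := by
  field_simp
  ring

lemma hfunEq (k : ℕ) (t : ℝ) (ht : t ≠ 0) (u : ℝ) :
    ((u ^ 2 + t ^ 2) ^ k)⁻¹ = (t ^ (2*k))⁻¹ * (((1:ℝ) + (t⁻¹ * u) ^ 2) ^ k)⁻¹ := by
  rw [← mul_inv, pow_mul, ← mul_pow, baseEq t ht u]

lemma myScaledIntegrable (k : ℕ) (t : ℝ) (ht : 0 < t) (hk : 1 ≤ k) :
    IntegrableOn (fun u : ℝ => ((u ^ 2 + t ^ 2) ^ k)⁻¹) (Ioi (0:ℝ)) := by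
  have h1 : IntegrableOn (fun u : ℝ => (((1:ℝ) + (t⁻¹ * u) ^ 2) ^ k)⁻¹) (Ioi (0:ℝ)) := by
    have := (integrableOn_Ioi_comp_mul_left_iff
      (fun v : ℝ => (((1:ℝ) + v ^ 2) ^ k)⁻¹) 0 (inv_pos.mpr ht)).2
    simpa using this (by simpa using myIntegrable k hk)
  have h2 : IntegrableOn (fun u : ℝ => (t ^ (2*k))⁻¹ * (((1:ℝ) + (t⁻¹ * u) ^ 2) ^ k)⁻¹)
      (Ioi (0:ℝ)) := h1.const_mul _
  exact IntegrableOn.congr_fun h2 (fun u _ => (hfunEq k t ht.ne' u).symm) measurableSet_Ioi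

lemma myScaledIntegral (k : ℕ) (hk : 1 ≤ k) (t : ℝ) (ht : 0 < t) :
    (∫ u in Ioi (0:ℝ), ((u ^ 2 + t ^ 2) ^ k)⁻¹) =
      (Real.sqrt π * Real.Gamma ((k:ℝ) - 1/2) / (2 * Real.Gamma k)) / t ^ (2*k-1) := by
  have h0 : ∫ u in Ioi (0:ℝ), ((u ^ 2 + t ^ 2) ^ k)⁻¹
      = ∫ u in Ioi (0:ℝ), (t ^ (2*k))⁻¹ * (((1:ℝ) + (t⁻¹ * u) ^ 2) ^ k)⁻¹ := by
    apply setIntegral_congr_fun measurableSet_Ioi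
    intro u _
    exact hfunEq k t ht.ne' u
  rw [h0, integral_const_mul]
  have h2 : (∫ u in Ioi (0:ℝ), (((1:ℝ) + (t⁻¹ * u) ^ 2) ^ k)⁻¹)
      = t * ∫ v in Ioi (0:ℝ), (((1:ℝ) + v ^ 2) ^ k)⁻¹ := by
    have := integral_comp_mul_left_Ioi (fun v : ℝ => (((1:ℝ) + v ^ 2) ^ k)⁻¹) 0
      (inv_pos.mpr ht)
    simp only [mul_zero, smul_eq_mul, inv_inv] at this
    exact this
  rw [h2, myIntegral k hk]
  have h3 : t ^ (2*k) = t ^ (2*k-1) * t := by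
    rw [← pow_succ]
    congr 1
    omega
  rw [h3]
  have ht1 : t ^ (2*k-1) ≠ 0 := by positivity
  field_simp

theorem abs_Rtildenext_le' (k : ℕ) (hk : 1 ≤ k) (t : ℝ) (ht : 0 < t) :
    |(-∫ u in Set.Ioi (0 : ℝ),
      ((Polynomial.aeval (Int.fract (u + 1 / 2)) (Polynomial.bernoulli (2 * k)) : ℝ) : ℂ) /
        ((4 * (k : ℂ)) * ((u : ℂ) + Complex.I * t) ^ (2 * k))).im| ≤
      Real.sqrt π * Real.Gamma ((k : ℝ) - 1 / 2) * |(bernoulli (2 * k) : ℝ)| /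
        (8 * (Nat.factorial k : ℝ) * t ^ (2 * k - 1)) := by
  set B : ℝ := |((bernoulli (2 * k) : ℚ) : ℝ)| with hB
  set f : ℝ → ℂ := fun u =>
      ((Polynomial.aeval (Int.fract (u + 1 / 2)) (Polynomial.bernoulli (2 * k)) : ℝ) : ℂ) /
        ((4 * (k : ℂ)) * ((u : ℂ) + Complex.I * t) ^ (2 * k)) with hf
  set bound : ℝ → ℝ := fun u => B / (4 * (k:ℝ)) * ((u ^ 2 + t ^ 2) ^ k)⁻¹ with hbound
  have hk0 : (0:ℝ) < (k:ℝ) := by exact_mod_cast hk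
  have hnorm : ∀ u : ℝ, ‖f u‖ =
      |(Polynomial.aeval (Int.fract (u + 1 / 2)) (Polynomial.bernoulli (2 * k)) : ℝ)| /
        ((4 * (k:ℝ)) * (u ^ 2 + t ^ 2) ^ k) := by
    intro u
    rw [hf]
    show ‖((Polynomial.aeval (Int.fract (u + 1 / 2)) (Polynomial.bernoulli (2 * k)) : ℝ) : ℂ) /
        ((4 * (k : ℂ)) * ((u : ℂ) + Complex.I * t) ^ (2 * k))‖ = _
    rw [norm_div, norm_mul, norm_pow]
    congr 1
    · rw [Complex.norm_real, Real.norm_eq_abs]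
    · congr 1
      · have h4 : (4 * (k:ℂ)) = (((4 * (k:ℝ)) : ℝ) : ℂ) := by push_cast; ring
        rw [h4, Complex.norm_real, Real.norm_eq_abs, abs_of_pos (by positivity)]
      · rw [pow_mul, Complex.sq_norm, mul_comm Complex.I,
          Complex.normSq_add_mul_I]
  have hmono : (∫ u in Ioi (0:ℝ), ‖f u‖) ≤ ∫ u in Ioi (0:ℝ), bound u := by
    apply integral_mono_of_nonneg
    · exact Filter.Eventually.of_forall (fun u => norm_nonneg _)
    · exact (myScaledIntegrable k t ht hk).const_mul _
    · apply Filter.Eventually.of_forall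
      intro u
      show ‖f u‖ ≤ bound u
      rw [hnorm u]
      show _ ≤ B / (4 * (k:ℝ)) * ((u ^ 2 + t ^ 2) ^ k)⁻¹
      rw [← div_eq_mul_inv, div_div]
      gcongr
      exact bernBound k (by omega) ⟨Int.fract_nonneg _, (Int.fract_lt_one _).le⟩
  have hval : (∫ u in Ioi (0:ℝ), bound u)
      = B / (4 * (k:ℝ)) *
        ((Real.sqrt π * Real.Gamma ((k:ℝ) - 1/2) / (2 * Real.Gamma k)) / t ^ (2*k-1)) := by
    rw [hbound]
    rw [integral_const_mul, myScaledIntegral k hk t ht]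
  have chain : |(-∫ u in Set.Ioi (0 : ℝ), f u).im| ≤
      B / (4 * (k:ℝ)) *
        ((Real.sqrt π * Real.Gamma ((k:ℝ) - 1/2) / (2 * Real.Gamma k)) / t ^ (2*k-1)) :=
    calc |(-∫ u in Set.Ioi (0 : ℝ), f u).im| = |(∫ u in Set.Ioi (0 : ℝ), f u).im| := by
          rw [Complex.neg_im, abs_neg]
      _ ≤ ‖∫ u in Set.Ioi (0 : ℝ), f u‖ :=
          Complex.abs_im_le_norm _
      _ ≤ ∫ u in Ioi (0:ℝ), ‖f u‖ := norm_integral_le_integral_norm _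
      _ ≤ ∫ u in Ioi (0:ℝ), bound u := hmono
      _ = _ := hval
  refine chain.trans (le_of_eq ?_)
  obtain ⟨m, rfl⟩ : ∃ m, k = m + 1 := ⟨k - 1, by omega⟩
  have hΓ : Real.Gamma (((m+1:ℕ)):ℝ) = (Nat.factorial m : ℝ) := by
    push_cast
    exact Real.Gamma_nat_eq_factorial m
  rw [hΓ, Nat.factorial_succ]
  have hfac : (0:ℝ) < (Nat.factorial m : ℝ) := by positivity
  have htp : (0:ℝ) < t ^ (2*(m+1)-1) := by positivity
  push_cast
  field_simp
  ring

end Helpers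

theorem abs_Rtildenext_le (k : ℕ) (hk : 1 ≤ k) (t : ℝ) (ht : 0 < t) :
    |Rtildenext k t| ≤
      Real.sqrt π * Real.Gamma ((k : ℝ) - 1 / 2) * |(bernoulli (2 * k) : ℝ)| /
        (8 * (Nat.factorial k : ℝ) * t ^ (2 * k - 1)) := by
  exact abs_Rtildenext_le' k hk t ht
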